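/- Let 0<q<1 and let a,b,z∈ℂ with |z|<1, a≠b, b≠aq and a≠bq. Put φ = ₂φ₁(a,b;−q;q,z), φ⁺ = ₂φ₁(aq, b/q; −q; q, z) and φ⁻ = ₂φ₁(a/q, bq; −q; q, z). Then ( q(1+q)(ab−q)/((aq−b)(a−bq)) + z )·φ = ( q(1−a)(b+q)/((a−b)(b−aq)) )·φ⁺ + ( q(1−b)(a+q)/((b−a)(a−bq)) )·φ⁻. -/

import Mathlib

open scoped BigOperators

noncomputable section

/-- finite q-Pochhammer symbol `(a;q)_n`. -/
def qPoch (a q : ℂ) (n : ℕ) : ℂ := ∏ j ∈ Finset.range n, (1 - a * q ^ j)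

/-- basic hypergeometric series `₂φ₁(a,b;c;q,z)`. -/
def phi21 (a b c q z : ℂ) : ℂ :=
  ∑' n : ℕ, (qPoch a q n * qPoch b q n) / (qPoch c q n * qPoch q q n) * z ^ n

/-!
Compare coefficients of `z ^ (n + 1)`. By the ratio of consecutive terms, the coefficients of `φ`,
`φ⁺` and `φ⁻` at `n + 1` are the coefficient of `φ` at `n` times rational functions of `q ^ n`, so
the relation reduces to a polynomial identity in `a, b, q, q ^ n`. The constant terms agree because
the coefficients of `φ⁺` and `φ⁻` sum to the constant coefficient of `φ` on the left. All three
series converge by the ratio test.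
-/

open Filter Topology

lemma tsum_eq_mul_tsum_of_succ {R : Type*} [DivisionRing R] [TopologicalSpace R]
    [IsTopologicalRing R] [T2Space R] {f g : ℕ → R} {z : R} (hf : Summable f) (h₀ : f 0 = 0)
    (hsucc : ∀ n, f (n + 1) = z * g n) : ∑' n, f n = z * ∑' n, g n := by
  rw [hf.tsum_eq_zero_add, h₀, zero_add, tsum_congr hsucc, tsum_mul_left]

lemma qPoch_succ (a q : ℂ) (n : ℕ) : qPoch a q (n + 1) = qPoch a q n * (1 - a * q ^ n) :=
  Finset.prod_range_succ _ _

lemma qPoch_succ' (a q : ℂ) (n : ℕ) : qPoch a q (n + 1) = (1 - a) * qPoch (a * q) q n := by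
  simp only [qPoch, Finset.prod_range_succ', pow_zero, mul_one, pow_succ, mul_assoc, mul_comm]

namespace phi21

variable {a b c q z : ℂ}

def coeff (a b c q : ℂ) (n : ℕ) : ℂ :=
  qPoch a q n * qPoch b q n / (qPoch c q n * qPoch q q n)

lemma eq_tsum_coeff : phi21 a b c q z = ∑' n, coeff a b c q n * z ^ n := rfl

@[simp]
lemma coeff_zero : coeff a b c q 0 = 1 := by simp [coeff, qPoch]

lemma coeff_comm (n : ℕ) : coeff a b c q n = coeff b a c q n := by
  rw [coeff, coeff, mul_comm (qPoch a q n)]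

lemma coeff_succ (n : ℕ) :
    coeff a b c q (n + 1) =
      coeff a b c q n *
        ((1 - a * q ^ n) * (1 - b * q ^ n) / ((1 - c * q ^ n) * (1 - q ^ (n + 1)))) := by
  simp only [coeff, qPoch_succ, div_eq_mul_inv, mul_inv]
  ring

/-- Multiplied through by `q * (1 - a)` so that `1 - a` need not be invertible. -/
lemma mul_coeff_mul_div_succ (hq : q ≠ 0) (n : ℕ) :
    q * (1 - a) * coeff (a * q) (b / q) c q (n + 1) =
      coeff a b c q n *
        ((q - b) * (1 - a * q ^ n) * (1 - a * q ^ (n + 1)) /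
          ((1 - c * q ^ n) * (1 - q ^ (n + 1)))) := by
  have hb : q * qPoch (b / q) q (n + 1) = (q - b) * qPoch b q n := by
    rw [qPoch_succ', div_mul_cancel₀ _ hq, ← mul_assoc, mul_sub, mul_div_cancel₀ _ hq, mul_one]
  have ha : (1 - a) * qPoch (a * q) q (n + 1) =
      qPoch a q n * (1 - a * q ^ n) * (1 - a * q ^ (n + 1)) := by
    rw [← qPoch_succ', qPoch_succ, qPoch_succ]
  calc q * (1 - a) * coeff (a * q) (b / q) c q (n + 1)
      = (1 - a) * qPoch (a * q) q (n + 1) * (q * qPoch (b / q) q (n + 1)) /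
          (qPoch c q (n + 1) * qPoch q q (n + 1)) := by rw [coeff]; ring
    _ = _ := by
      rw [ha, hb, qPoch_succ c, qPoch_succ q]
      simp only [coeff, div_eq_mul_inv, mul_inv]
      ring

lemma summable_coeff_mul_pow (a b c : ℂ) (hq : ‖q‖ < 1) (hz : ‖z‖ < 1) :
    Summable fun n ↦ coeff a b c q n * z ^ n := by
  set ratio : ℂ → ℂ := fun x ↦ (1 - a * x) * (1 - b * x) / ((1 - c * x) * (1 - q * x)) * z
  have hstep (n : ℕ) :
      coeff a b c q (n + 1) * z ^ (n + 1) = ratio (q ^ n) * (coeff a b c q n * z ^ n) := by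
    rw [coeff_succ, pow_succ, pow_succ']
    ring
  have hlim : Tendsto (fun n ↦ ‖ratio (q ^ n)‖) atTop (𝓝 ‖z‖) := by
    have hcont : ContinuousAt ratio 0 := by fun_prop (disch := simp)
    simpa [ratio] using
      (hcont.tendsto.comp (tendsto_pow_atTop_nhds_zero_of_norm_lt_one hq)).norm
  obtain ⟨r, hzr, hr⟩ := exists_between hz
  refine summable_of_ratio_norm_eventually_le hr ?_
  filter_upwards [hlim.eventually_lt_const hzr] with n hn
  rw [hstep, norm_mul]
  gcongr

/-- Dividing the coefficient of `z ^ (n + 1)` in the contiguous relation by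
`coeff a b (-q) q n / ((1 + q ^ (n + 1)) * (1 - q ^ (n + 1)))` leaves this identity
at `x = q ^ n`. -/
lemma contiguous_polynomial_identity (a b q x : ℂ) :
    (b + q) * (q - b) * (1 - a * x) * (1 - a * (q * x)) * (a - b * q)
      - (a + q) * (q - a) * (1 - b * x) * (1 - b * (q * x)) * (b - a * q)
      + q * (1 + q) * (a * b - q) * (a - b) * (1 - a * x) * (1 - b * x)
      = (a - b) * (b - a * q) * (a - b * q) * (1 + q * x) * (1 - q * x) := by
  ring

lemma coeff_contiguous (hq : ‖q‖ < 1) (hq₀ : q ≠ 0) (hab : a ≠ b) (hab₁ : b ≠ a * q)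
    (hab₂ : a ≠ b * q) (n : ℕ) :
    q * (1 - a) * (b + q) / ((a - b) * (b - a * q)) * coeff (a * q) (b / q) (-q) q (n + 1)
      + q * (1 - b) * (a + q) / ((b - a) * (a - b * q)) * coeff (a / q) (b * q) (-q) q (n + 1)
      = q * (1 + q) * (a * b - q) / ((a * q - b) * (a - b * q)) * coeff a b (-q) q (n + 1)
        + coeff a b (-q) q n := by
  have hu := mul_coeff_mul_div_succ (a := a) (b := b) (c := -q) hq₀ n
  have hv := mul_coeff_mul_div_succ (a := b) (b := a) (c := -q) hq₀ n
  have ht := coeff_succ (a := a) (b := b) (c := -q) (q := q) n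
  rw [coeff_comm, coeff_comm (a := b)] at hv
  have hpow : ‖q ^ (n + 1)‖ < 1 := by
    rw [norm_pow]; exact pow_lt_one₀ (norm_nonneg _) hq n.succ_ne_zero
  have h₁ : 1 - -(q * q ^ n) ≠ 0 := by
    simpa [pow_succ'] using (Units.oneSub (-q ^ (n + 1)) (by rwa [norm_neg])).ne_zero
  have h₂ : 1 - q ^ (n + 1) ≠ 0 := (Units.oneSub _ hpow).ne_zero
  have h₃ : a - b ≠ 0 := sub_ne_zero.2 hab
  have h₄ : b - q * a ≠ 0 := by rwa [sub_ne_zero, mul_comm]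
  have h₅ : a - b * q ≠ 0 := sub_ne_zero.2 hab₂
  have h₆ : b - a ≠ 0 := sub_ne_zero.2 hab.symm
  have h₇ : q * a - b ≠ 0 := by rwa [sub_ne_zero, mul_comm, ne_comm]
  have hA : q * (1 - a) * (b + q) / ((a - b) * (b - a * q)) * coeff (a * q) (b / q) (-q) q (n + 1)
      = (b + q) / ((a - b) * (b - a * q)) *
          (q * (1 - a) * coeff (a * q) (b / q) (-q) q (n + 1)) := by
    ring
  have hB : q * (1 - b) * (a + q) / ((b - a) * (a - b * q)) * coeff (a / q) (b * q) (-q) q (n + 1)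
      = (a + q) / ((b - a) * (a - b * q)) *
          (q * (1 - b) * coeff (a / q) (b * q) (-q) q (n + 1)) := by
    ring
  rw [hA, hB, hu, hv, ht]
  field_simp
  linear_combination coeff a b (-q) q n * (b - a) * (q * a - b) *
    contiguous_polynomial_identity a b q (q ^ n)

lemma contiguous_coeff_add (hab : a ≠ b) (hab₁ : b ≠ a * q) (hab₂ : a ≠ b * q) :
    q * (1 - a) * (b + q) / ((a - b) * (b - a * q))
        + q * (1 - b) * (a + q) / ((b - a) * (a - b * q))
      = q * (1 + q) * (a * b - q) / ((a * q - b) * (a - b * q)) := by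
  have h₁ : a - b ≠ 0 := sub_ne_zero.2 hab
  have h₂ : b - a * q ≠ 0 := sub_ne_zero.2 hab₁
  have h₃ : a - b * q ≠ 0 := sub_ne_zero.2 hab₂
  have h₄ : b - a ≠ 0 := sub_ne_zero.2 hab.symm
  have h₅ : a * q - b ≠ 0 := sub_ne_zero.2 hab₁.symm
  rw [div_add_div _ _ (mul_ne_zero h₁ h₂) (mul_ne_zero h₄ h₃),
    div_eq_div_iff (mul_ne_zero (mul_ne_zero h₁ h₂) (mul_ne_zero h₄ h₃)) (mul_ne_zero h₅ h₃)]
  ring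

end phi21

open phi21 in
/-- Contiguous relation for `₂φ₁`-series (equation (3.5) of the paper):
with `φ = ₂φ₁(a,b;−q;q,z)`, `φ⁺ = ₂φ₁(aq,b/q;−q;q,z)`, `φ⁻ = ₂φ₁(a/q,bq;−q;q,z)`,
`(q(1+q)(ab−q)/((aq−b)(a−bq)) + z)·φ
  = (q(1−a)(b+q)/((a−b)(b−aq)))·φ⁺ + (q(1−b)(a+q)/((b−a)(a−bq)))·φ⁻`. -/
theorem contiguous_relation_phi (q : ℝ) (hq0 : 0 < q) (hq1 : q < 1) (a b z : ℂ)
    (hz : ‖z‖ < 1) (hab : a ≠ b) (hab1 : b ≠ a * (q : ℂ)) (hab2 : a ≠ b * (q : ℂ)) :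
    ((q : ℂ) * (1 + (q : ℂ)) * (a * b - (q : ℂ)) /
        ((a * (q : ℂ) - b) * (a - b * (q : ℂ))) + z) * phi21 a b (-(q : ℂ)) (q : ℂ) z =
      (q : ℂ) * (1 - a) * (b + (q : ℂ)) / ((a - b) * (b - a * (q : ℂ))) *
          phi21 (a * (q : ℂ)) (b / (q : ℂ)) (-(q : ℂ)) (q : ℂ) z +
        (q : ℂ) * (1 - b) * (a + (q : ℂ)) / ((b - a) * (a - b * (q : ℂ))) *
          phi21 (a / (q : ℂ)) (b * (q : ℂ)) (-(q : ℂ)) (q : ℂ) z := by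
  have hq : ‖(q : ℂ)‖ < 1 := by rwa [Complex.norm_of_nonneg hq0.le]
  have hq₀ : (q : ℂ) ≠ 0 := Complex.ofReal_ne_zero.2 hq0.ne'
  set A := (q : ℂ) * (1 - a) * (b + q) / ((a - b) * (b - a * q))
  set B := (q : ℂ) * (1 - b) * (a + q) / ((b - a) * (a - b * q))
  set C := (q : ℂ) * (1 + q) * (a * b - q) / ((a * q - b) * (a - b * q))
  have hφ := summable_coeff_mul_pow a b (-q) hq hz
  have hφup := summable_coeff_mul_pow (a * q) (b / q) (-q) hq hz
  have hφdown := summable_coeff_mul_pow (a / q) (b * q) (-q) hq hz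
  have hseries := tsum_eq_mul_tsum_of_succ (z := z) (g := fun n ↦ coeff a b (-q) q n * z ^ n)
    (((hφup.mul_left A).add (hφdown.mul_left B)).sub (hφ.mul_left C))
    (by simp [contiguous_coeff_add hab hab1 hab2, A, B, C])
    (fun n ↦ by
      rw [pow_succ']
      linear_combination z * z ^ n * coeff_contiguous hq hq₀ hab hab1 hab2 n)
  rw [(hφup.mul_left A).add (hφdown.mul_left B) |>.tsum_sub (hφ.mul_left C),
    (hφup.mul_left A).tsum_add (hφdown.mul_left B), tsum_mul_left, tsum_mul_left, tsum_mul_left]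
    at hseries
  simp only [eq_tsum_coeff]
  linear_combination -hseries

end
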